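/- arXiv:2103.12690 — 5 statements merged into one kernel-verified Lean document; each statement's English description precedes it below -/
import Mathlib

section
/- For any real γ > 0 and positive integers d and m with m ≤ exp(γ²·d/8), there exist m unit vectors v₁, …, v_m in ℝ^d (Euclidean space with the standard inner product) such that for all i ≠ j in {1, …, m}, |⟨v_i, v_j⟩| ≤ γ. -/
/-!
Use normalised sign vectors `x / √d` with `x ∈ {±1}^d`. For fixed `y ∈ {±1}^d`, summing
`exp (t ⟪x, y⟫)` over all `x` factors coordinatewise into `(2 cosh t)^d ≤ 2^d exp (d t² / 2)`, so
the Chernoff bound with `t = γ` shows that at most `2 · 2^d · exp (-γ² d / 2)` sign vectors satisfy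
`|⟪x, y⟫| ≥ γ d`. Hence, while fewer than `exp (γ² d / 2) / 2` vectors have been chosen, some sign
vector is nearly orthogonal to all of them, and the `m ≤ exp (γ² d / 8)` vectors can be picked
greedily.
-/

open Finset Real
open scoped RealInnerProductSpace

theorem exists_pairwise_of_forall_exists {α : Type*} {r : α → α → Prop} [Std.Symm r] {m : ℕ}
    (h : ∀ k < m, ∀ v : Fin k → α, ∃ x, ∀ i, r x (v i)) :
    ∃ v : Fin m → α, Pairwise fun i j => r (v i) (v j) := by
  induction m with
  | zero => exact ⟨Fin.elim0, fun i => i.elim0⟩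
  | succ m ih =>
    obtain ⟨v, hv⟩ := ih fun k hk => h k (hk.trans m.lt_succ_self)
    obtain ⟨x, hx⟩ := h m m.lt_succ_self v
    refine ⟨Fin.cons x v, fun i j hij => ?_⟩
    cases i using Fin.cases <;> cases j using Fin.cases
    · exact absurd rfl hij
    · exact hx _
    · exact symm (hx _)
    · exact hv (ne_of_apply_ne Fin.succ hij)

def boolSign (b : Bool) : ℝ := if b then 1 else -1

lemma boolSign_mul_self (b : Bool) : boolSign b * boolSign b = 1 := by
  cases b <;> simp [boolSign]

lemma boolSign_not (b : Bool) : boolSign (!b) = -boolSign b := by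
  cases b <;> simp [boolSign]

lemma card_filter_le_le_exp_mul_sum_exp {α : Type*} [Fintype α] (f : α → ℝ) {t : ℝ}
    (ht : 0 ≤ t) (s : ℝ) : (#{x | s ≤ f x} : ℝ) ≤ exp (-(t * s)) * ∑ x, exp (t * f x) := by
  rw [exp_neg, inv_mul_eq_div, le_div_iff₀ (exp_pos _)]
  calc (#{x | s ≤ f x} : ℝ) * exp (t * s) ≤ ∑ x ∈ {x | s ≤ f x}, exp (t * f x) := by
        rw [← nsmul_eq_mul]
        exact card_nsmul_le_sum _ _ _ fun x hx =>
          exp_le_exp.2 (by gcongr; exact (mem_filter.1 hx).2)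
    _ ≤ ∑ x, exp (t * f x) := sum_le_univ_sum_of_nonneg fun _ => (exp_pos _).le

section SignVectors

variable {ι : Type*}

def signVec (x : ι → Bool) : EuclideanSpace ℝ ι := WithLp.toLp 2 fun i => boolSign (x i)

lemma signVec_not (x : ι → Bool) : signVec (fun i => !x i) = -signVec x := by
  ext i; simp [signVec, boolSign_not]

variable [Fintype ι]

lemma inner_signVec (x y : ι → Bool) :
    ⟪signVec x, signVec y⟫ = ∑ i, boolSign (x i) * boolSign (y i) := by
  simp only [signVec, PiLp.inner_apply, RCLike.inner_apply, conj_trivial, mul_comm]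

lemma norm_signVec (x : ι → Bool) : ‖signVec x‖ = √(Fintype.card ι) := by
  rw [norm_eq_sqrt_real_inner, inner_signVec]
  simp [boolSign_mul_self]

variable [DecidableEq ι]

lemma sum_exp_mul_inner_signVec (y : ι → Bool) (t : ℝ) :
    ∑ x, exp (t * ⟪signVec x, signVec y⟫) = (2 * cosh t) ^ Fintype.card ι := by
  have hcoord (c : Bool) : ∑ b, exp (t * (boolSign b * boolSign c)) = 2 * cosh t := by
    cases c <;> simp [boolSign, cosh_eq] <;> ring
  simp only [inner_signVec, mul_sum, exp_sum]
  rw [← Fintype.prod_sum (fun i b => exp (t * (boolSign b * boolSign (y i)))),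
    prod_congr rfl fun i _ => hcoord (y i), prod_const, card_univ]

lemma card_inner_signVec_ge_le (y : ι → Bool) {γ : ℝ} (hγ : 0 ≤ γ) :
    (#{x | γ * Fintype.card ι ≤ ⟪signVec x, signVec y⟫} : ℝ)
      ≤ 2 ^ Fintype.card ι * exp (-(γ ^ 2 * Fintype.card ι / 2)) := by
  set n := Fintype.card ι
  calc (#{x | γ * n ≤ ⟪signVec x, signVec y⟫} : ℝ)
      ≤ exp (-(γ * (γ * n))) * ∑ x, exp (γ * ⟪signVec x, signVec y⟫) :=
        card_filter_le_le_exp_mul_sum_exp _ hγ _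
    _ ≤ exp (-(γ * (γ * n))) * (2 * exp (γ ^ 2 / 2)) ^ n := by
        rw [sum_exp_mul_inner_signVec]
        gcongr
        exact cosh_le_exp_half_sq γ
    _ = 2 ^ n * exp (-(γ ^ 2 * n / 2)) := by
        rw [mul_pow, ← exp_nat_mul, mul_left_comm, ← exp_add]
        ring_nf

lemma card_abs_inner_signVec_ge_le (y : ι → Bool) {γ : ℝ} (hγ : 0 ≤ γ) :
    (#{x | γ * Fintype.card ι ≤ |⟪signVec x, signVec y⟫|} : ℝ)
      ≤ 2 * (2 ^ Fintype.card ι * exp (-(γ ^ 2 * Fintype.card ι / 2))) := by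
  have hneg (x : ι → Bool) : -⟪signVec x, signVec y⟫ = ⟪signVec x, signVec fun i => !y i⟫ := by
    rw [signVec_not, inner_neg_right]
  simp only [le_abs, hneg, filter_or]
  grw [card_union_le]
  push_cast
  grw [card_inner_signVec_ge_le y hγ, card_inner_signVec_ge_le _ hγ]
  linarith

lemma exists_forall_abs_inner_signVec_lt {κ : Type*} [Fintype κ] (y : κ → ι → Bool) {γ : ℝ}
    (hγ : 0 ≤ γ) (hκ : 2 * Fintype.card κ * exp (-(γ ^ 2 * Fintype.card ι / 2)) < 1) :
    ∃ x : ι → Bool, ∀ k, |⟪signVec x, signVec (y k)⟫| < γ * Fintype.card ι := by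
  by_contra! hbad
  have hcover : (univ : Finset (ι → Bool)) ⊆
      univ.biUnion fun k => {x | γ * Fintype.card ι ≤ |⟪signVec x, signVec (y k)⟫|} := by
    intro x _
    obtain ⟨k, hk⟩ := hbad x
    simpa using ⟨k, hk⟩
  have hcard : (2 : ℝ) ^ Fintype.card ι
      ≤ Fintype.card κ * (2 * (2 ^ Fintype.card ι * exp (-(γ ^ 2 * Fintype.card ι / 2)))) := by
    calc (2 : ℝ) ^ Fintype.card ι = #(univ : Finset (ι → Bool)) := by simp
      _ ≤ ∑ k, (#{x | γ * Fintype.card ι ≤ |⟪signVec x, signVec (y k)⟫|} : ℝ) := by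
        exact_mod_cast (card_le_card hcover).trans card_biUnion_le
      _ ≤ _ := by
        grw [sum_le_sum fun k _ => card_abs_inner_signVec_ge_le (y k) hγ]
        simp
  nlinarith [pow_pos (two_pos (α := ℝ)) (Fintype.card ι)]

end SignVectors

lemma two_mul_mul_exp_neg_half_lt_one {a : ℝ} (ha : 0 ≤ a) {k m : ℕ} (hkm : k < m)
    (hm : (m : ℝ) ≤ exp (a / 8)) : 2 * k * exp (-(a / 2)) < 1 := by
  have hk : (k + 1 : ℝ) ≤ m := by exact_mod_cast hkm
  have h2k : 2 * (k : ℝ) < exp (a / 2) :=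
    calc 2 * (k : ℝ) < (k + 1) ^ 2 := by nlinarith
      _ ≤ exp (a / 8) ^ 2 := by gcongr; exact hk.trans hm
      _ = exp (a / 4) := by rw [← exp_nat_mul]; ring_nf
      _ ≤ exp (a / 2) := by gcongr; linarith
  rwa [exp_neg, ← div_eq_mul_inv, div_lt_one (exp_pos _)]

theorem johnson_lindenstrauss_near_orthogonal_general
    (γ : ℝ) (hγ : 0 < γ) (d m : ℕ) (hd : 0 < d)
    (hmle : (m : ℝ) ≤ Real.exp (γ ^ 2 * d / 8)) :
    ∃ v : Fin m → EuclideanSpace ℝ (Fin d),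
      (∀ i, ‖v i‖ = 1) ∧
      ∀ i j, i ≠ j → |(inner ℝ (v i) (v j) : ℝ)| ≤ γ := by
  let r (x y : Fin d → Bool) : Prop := |⟪signVec x, signVec y⟫| < γ * d
  have : Std.Symm r := ⟨fun x y => by simp only [r, real_inner_comm, imp_self]⟩
  obtain ⟨w, hw⟩ := exists_pairwise_of_forall_exists (r := r) (m := m) fun k hk v => by
    simpa using exists_forall_abs_inner_signVec_lt v hγ.le
      (by simpa using two_mul_mul_exp_neg_half_lt_one (by positivity) hk hmle)
  have hd' : (0 : ℝ) < d := by exact_mod_cast hd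
  refine ⟨fun i => (√d)⁻¹ • signVec (w i), fun i => ?_, fun i j hij => ?_⟩
  · rw [norm_smul, norm_signVec, Fintype.card_fin, norm_inv, norm_of_nonneg (sqrt_nonneg _),
      inv_mul_cancel₀ (sqrt_pos.2 hd').ne']
  · rw [inner_smul_left, inner_smul_right, conj_trivial, ← mul_assoc, ← mul_inv,
      mul_self_sqrt hd'.le, abs_mul, abs_inv, abs_of_pos hd', inv_mul_le_iff₀ hd', mul_comm]
    exact (hw hij).le

/-- **Johnson–Lindenstrauss type lemma.** For any real `γ > 0` and positive integers `d`, `m`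
with `m ≤ exp (γ² * d / 8)`, there exist `m` unit vectors in `ℝ^d` whose pairwise inner
products are at most `γ` in absolute value. -/
theorem johnson_lindenstrauss_near_orthogonal
    (γ : ℝ) (hγ : 0 < γ) (d m : ℕ) (hd : 0 < d) (hm : 0 < m)
    (hmle : (m : ℝ) ≤ Real.exp (γ ^ 2 * d / 8)) :
    ∃ v : Fin m → EuclideanSpace ℝ (Fin d),
      (∀ i, ‖v i‖ = 1) ∧
      ∀ i j, i ≠ j → |(inner ℝ (v i) (v j) : ℝ)| ≤ γ :=
  johnson_lindenstrauss_near_orthogonal_general γ hγ d m hd hmle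
end

section
/- Let S and A be finite nonempty sets, φ : S × A → ℝ^d a feature map, and for each s ∈ S let ρ_s be a probability distribution on A such that the matrix Σ_s := Σ_{a∈A} ρ_s(a)·φ(s,a)·φ(s,a)ᵀ is invertible and max_{a∈A} φ(s,a)ᵀ Σ_s⁻¹ φ(s,a) ≤ d. Let ν be a probability distribution on S and suppose the averaged covariance matrix Σ := Σ_{s∈S} ν(s)·Σ_s is invertible. Then Σ_{s∈S} ν(s) · max_{a∈A} φ(s,a)ᵀ Σ⁻¹ φ(s,a) ≤ d². -/
/-!
For a G-optimal design, `φ φᵀ ≤ d • K s` in the Loewner order (Cauchy–Schwarz for the form `K s`).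
Pairing with the positive semidefinite `Kbar⁻¹` through the trace bounds every leverage
`φᵀ Kbar⁻¹ φ` at state `s` by `d · tr (Kbar⁻¹ K s)`, and averaging over `ν` yields
`d · tr (Kbar⁻¹ Kbar) = d · d`.
-/

open Matrix
open scoped MatrixOrder ComplexOrder

namespace Matrix

variable {n : Type*}

theorem posSemidef_sum_smul {R ι : Type*} [CommRing R] [PartialOrder R] [StarRing R]
    [StarOrderedRing R] [Fintype ι] {c : ι → R} {P : ι → Matrix n n R}
    (hc : ∀ i, 0 ≤ c i) (hP : ∀ i, (P i).PosSemidef) : (∑ i, c i • P i).PosSemidef :=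
  posSemidef_sum _ fun i _ => (hP i).smul (hc i)

variable [Fintype n]

theorem trace_mul_vecMulVec_self {R : Type*} [CommSemiring R] (M : Matrix n n R) (x : n → R) :
    (M * vecMulVec x x).trace = x ⬝ᵥ M *ᵥ x := by
  rw [mul_vecMulVec, trace_vecMulVec, dotProduct_comm]

variable [DecidableEq n]

theorem PosSemidef.trace_mul_le_trace_mul {𝕜 : Type*} [RCLike 𝕜] {M A B : Matrix n n 𝕜}
    (hM : M.PosSemidef) (hAB : A ≤ B) : (M * A).trace ≤ (M * B).trace := by
  obtain ⟨C, rfl⟩ := CStarAlgebra.nonneg_iff_eq_star_mul_self.mp hM.nonneg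
  rw [← sub_nonneg, ← trace_sub, ← Matrix.mul_sub, mul_assoc, trace_mul_comm,
    star_eq_conjTranspose]
  exact (hAB.mul_mul_conjTranspose_same C).trace_nonneg

theorem PosDef.vecMulVec_self_le_smul {K : Matrix n n ℝ} (hK : K.PosDef) (x : n → ℝ) :
    vecMulVec x x ≤ (x ⬝ᵥ K⁻¹ *ᵥ x) • K := by
  set w := K⁻¹ *ᵥ x
  have hKw : K *ᵥ w = x := by
    simp [w, mulVec_mulVec, mul_nonsing_inv _ ((isUnit_iff_isUnit_det K).mp hK.isUnit)]
  have hsymm (u v : n → ℝ) : u ⬝ᵥ K *ᵥ v = v ⬝ᵥ K *ᵥ u := by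
    rw [dotProduct_mulVec, ← mulVec_transpose, ← conjTranspose_eq_transpose_of_trivial,
      hK.isHermitian.eq, dotProduct_comm]
  refine PosSemidef.of_dotProduct_mulVec_nonneg ?_ fun v => ?_
  · simpa using (hK.isHermitian.smul (IsSelfAdjoint.all _)).sub
      (posSemidef_vecMulVec_self_star x).isHermitian
  -- Cauchy–Schwarz for the form `K`, via the discriminant of `t ↦ (v - t w)ᵀ K (v - t w)`.
  have hquad (t : ℝ) : 0 ≤ (x ⬝ᵥ w) * (t * t) + (-2 * (x ⬝ᵥ v)) * t + v ⬝ᵥ K *ᵥ v := by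
    have := hK.posSemidef.dotProduct_mulVec_nonneg (v - t • w)
    simp only [star_trivial, mulVec_sub, mulVec_smul, dotProduct_sub, sub_dotProduct,
      dotProduct_smul, smul_dotProduct, smul_eq_mul, hKw, hsymm w v, dotProduct_comm v x,
      dotProduct_comm w x] at this
    linarith
  have hdiscrim := discrim_le_zero hquad
  rw [discrim] at hdiscrim
  simp only [star_trivial, sub_mulVec, smul_mulVec, dotProduct_sub, dotProduct_smul, smul_eq_mul,
    vecMulVec_mulVec, op_smul_eq_mul, dotProduct_comm v x]
  nlinarith

theorem PosSemidef.dotProduct_mulVec_le_mul_trace {M K : Matrix n n ℝ} (hM : M.PosSemidef)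
    (hK : K.PosDef) (x : n → ℝ) :
    x ⬝ᵥ M *ᵥ x ≤ (x ⬝ᵥ K⁻¹ *ᵥ x) * (M * K).trace :=
  calc x ⬝ᵥ M *ᵥ x = (M * vecMulVec x x).trace := (trace_mul_vecMulVec_self M x).symm
    _ ≤ (M * ((x ⬝ᵥ K⁻¹ *ᵥ x) • K)).trace :=
        hM.trace_mul_le_trace_mul (hK.vecMulVec_self_le_smul x)
    _ = (x ⬝ᵥ K⁻¹ *ᵥ x) * (M * K).trace := by rw [Matrix.mul_smul, trace_smul, smul_eq_mul]

end Matrix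

theorem averaged_G_optimal_design_bound_general
    {S A : Type*} [Fintype S] [Fintype A] [Nonempty A]
    (d : ℕ) (φ : S × A → Fin d → ℝ) (ρ : S → A → ℝ) (ν : S → ℝ)
    (hρ0 : ∀ s a, 0 ≤ ρ s a)
    (hν0 : ∀ s, 0 ≤ ν s)
    (K : S → Matrix (Fin d) (Fin d) ℝ)
    (hK : ∀ s, K s = ∑ a, ρ s a • vecMulVec (φ (s, a)) (φ (s, a)))
    (hKinv : ∀ s, IsUnit (K s))
    (hGopt : ∀ s a, dotProduct (φ (s, a)) ((K s)⁻¹.mulVec (φ (s, a))) ≤ (d : ℝ))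
    (Kbar : Matrix (Fin d) (Fin d) ℝ)
    (hKbar : Kbar = ∑ s, ν s • K s)
    (hKbarinv : IsUnit Kbar) :
    ∑ s, ν s *
        (Finset.univ.sup' Finset.univ_nonempty
          (fun a : A => dotProduct (φ (s, a)) (Kbar⁻¹.mulVec (φ (s, a)))))
      ≤ (d : ℝ) ^ 2 := by
  have hKpsd (s : S) : (K s).PosSemidef :=
    hK s ▸ posSemidef_sum_smul (hρ0 s) fun a => by
      simpa using posSemidef_vecMulVec_self_star (φ (s, a))
  have hKbar_inv : Kbar⁻¹.PosSemidef := (hKbar ▸ posSemidef_sum_smul hν0 hKpsd).inv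
  have hleverage (s : S) (a : A) :
      φ (s, a) ⬝ᵥ Kbar⁻¹ *ᵥ φ (s, a) ≤ d * (Kbar⁻¹ * K s).trace := by
    have htrace_nonneg : 0 ≤ (Kbar⁻¹ * K s).trace := by
      simpa using hKbar_inv.trace_mul_le_trace_mul (hKpsd s).nonneg
    exact (hKbar_inv.dotProduct_mulVec_le_mul_trace
      ((hKpsd s).posDef_iff_isUnit.mpr (hKinv s)) _).trans
      (mul_le_mul_of_nonneg_right (hGopt s a) htrace_nonneg)
  calc _ ≤ ∑ s, ν s * (d * (Kbar⁻¹ * K s).trace) :=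
        Finset.sum_le_sum fun s _ => mul_le_mul_of_nonneg_left
          (Finset.sup'_le _ _ fun a _ => hleverage s a) (hν0 s)
    _ = d * (Kbar⁻¹ * ∑ s, ν s • K s).trace := by
        simp only [trace_sum, Matrix.mul_smul, trace_smul, smul_eq_mul,
          Finset.mul_sum, mul_left_comm]
    _ = (d : ℝ) ^ 2 := by
        rw [← hKbar, nonsing_inv_mul _ ((isUnit_iff_isUnit_det _).mp hKbarinv), trace_one,
          Fintype.card_fin, sq]

/-- **Averaged G-optimal design bound (Lemma 4 of Ruan et al., Lemma 5 in the paper).**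
If for each state `s` the distribution `ρ s` is a G-optimal design for the feature set
`{φ(s,a)}_{a∈A}` (covariance `K s` invertible and worst-case leverage at most `d`), and
`ν` is a distribution over states with invertible averaged covariance `Kbar`, then the
`ν`-average over states of `max_a φ(s,a)ᵀ Kbar⁻¹ φ(s,a)` is at most `d²`. -/
theorem averaged_G_optimal_design_bound
    {S A : Type*} [Fintype S] [Fintype A] [Nonempty S] [Nonempty A]
    (d : ℕ) (φ : S × A → Fin d → ℝ) (ρ : S → A → ℝ) (ν : S → ℝ)
    (hρ0 : ∀ s a, 0 ≤ ρ s a) (hρ1 : ∀ s, ∑ a, ρ s a = 1)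
    (hν0 : ∀ s, 0 ≤ ν s) (hν1 : ∑ s, ν s = 1)
    (K : S → Matrix (Fin d) (Fin d) ℝ)
    (hK : ∀ s, K s = ∑ a, ρ s a • vecMulVec (φ (s, a)) (φ (s, a)))
    (hKinv : ∀ s, IsUnit (K s))
    (hGopt : ∀ s a, dotProduct (φ (s, a)) ((K s)⁻¹.mulVec (φ (s, a))) ≤ (d : ℝ))
    (Kbar : Matrix (Fin d) (Fin d) ℝ)
    (hKbar : Kbar = ∑ s, ν s • K s)
    (hKbarinv : IsUnit Kbar) :
    ∑ s, ν s *
        (Finset.univ.sup' Finset.univ_nonempty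
          (fun a : A => dotProduct (φ (s, a)) (Kbar⁻¹.mulVec (φ (s, a)))))
      ≤ (d : ℝ) ^ 2 :=
  averaged_G_optimal_design_bound_general d φ ρ ν hρ0 hν0 K hK hKinv hGopt Kbar hKbar hKbarinv
end

section
/- Let d ≥ 1 and let X be a random vector in ℝ^d whose distribution is isotropic, i.e., E[⟨v, X⟩²] = ‖v‖² for all v ∈ ℝ^d, and (C,4)-hypercontractive for some C ≥ 1, i.e., E[⟨v, X⟩⁴] ≤ C·(E[⟨v, X⟩²])² for all v ∈ ℝ^d. Then E[‖X‖₂⁴] ≤ C·(d² + 2d)/3 ≤ C·d². -/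
/-!
Rademacher averaging replaces the Gaussian direction: over the `2 ^ d` sign vectors `ε ∈ {±1}ᵈ`,
the average of `⟪ε, x⟫⁴` is `3 ‖x‖⁴ - 2 ∑ xᵢ⁴`, because all odd moments of the signs cancel.
Hence `3 E‖X‖⁴ = avg_ε E⟪ε, X⟫⁴ + 2 ∑ E Xᵢ⁴`. Isotropy and hypercontractivity give
`E⟪v, X⟫⁴ ≤ C ‖v‖⁴`, which is `C d²` for a sign vector and `C` for a basis vector, so
`3 E‖X‖⁴ ≤ C d² + 2 C d`.
-/

open MeasureTheory Finset

lemma Int.cast_units_sq {R : Type*} [Ring R] (u : ℤˣ) : ((u : ℤ) : R) ^ 2 = 1 := by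
  rw [← Int.cast_pow, ← Units.val_pow_eq_pow_val, Int.units_sq, Units.val_one, Int.cast_one]

lemma Fintype.sum_units_int {M : Type*} [AddCommMonoid M] (f : ℤˣ → M) :
    ∑ u, f u = f 1 + f (-1) := by
  rw [UnitsInt.univ, sum_pair (by decide)]

lemma Fin.sum_univ_pi_succ {M α : Type*} [AddCommMonoid M] [Fintype α] {d : ℕ}
    (f : (Fin (d + 1) → α) → M) : ∑ ε, f ε = ∑ a, ∑ ε : Fin d → α, f (Fin.cons a ε) := by
  rw [← (Fin.consEquiv fun _ => α).sum_comp, Fintype.sum_prod_type]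
  rfl

section RademacherSums

variable {R : Type*} [CommRing R]

lemma sum_units_int_mul_add_sq (a t : R) :
    ∑ u : ℤˣ, ((u : R) * a + t) ^ 2 = 2 * (a ^ 2 + t ^ 2) := by
  rw [Fintype.sum_units_int]; push_cast; ring

lemma sum_units_int_mul_add_pow_four (a t : R) :
    ∑ u : ℤˣ, ((u : R) * a + t) ^ 4 = 2 * (a ^ 4 + 6 * a ^ 2 * t ^ 2 + t ^ 4) := by
  rw [Fintype.sum_units_int]; push_cast; ring

theorem sum_signs_sum_mul_sq {d : ℕ} (x : Fin d → R) :
    ∑ ε : Fin d → ℤˣ, (∑ i, (ε i : R) * x i) ^ 2 = 2 ^ d * ∑ i, x i ^ 2 := by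
  induction d with
  | zero => simp
  | succ d ih =>
    simp only [Fin.sum_univ_pi_succ, Fin.sum_univ_succ, Fin.cons_zero, Fin.cons_succ]
    rw [sum_comm]
    simp only [sum_units_int_mul_add_sq, ← mul_sum, sum_add_distrib, sum_const, card_univ,
      Fintype.card_fun, Fintype.card_units_int, Fintype.card_fin, ih]
    simp only [nsmul_eq_mul]; push_cast
    ring

theorem sum_signs_sum_mul_pow_four {d : ℕ} (x : Fin d → R) :
    ∑ ε : Fin d → ℤˣ, (∑ i, (ε i : R) * x i) ^ 4
      = 2 ^ d * (3 * (∑ i, x i ^ 2) ^ 2 - 2 * ∑ i, x i ^ 4) := by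
  induction d with
  | zero => simp
  | succ d ih =>
    simp only [Fin.sum_univ_pi_succ, Fin.sum_univ_succ, Fin.cons_zero, Fin.cons_succ]
    rw [sum_comm]
    simp only [sum_units_int_mul_add_pow_four, ← mul_sum, sum_add_distrib, sum_const, card_univ,
      Fintype.card_fun, Fintype.card_units_int, Fintype.card_fin, ih, sum_signs_sum_mul_sq]
    simp only [nsmul_eq_mul]; push_cast
    ring

end RademacherSums

section SignVectors

variable {d : ℕ}

def signVector (ε : Fin d → ℤˣ) : EuclideanSpace ℝ (Fin d) := WithLp.toLp 2 fun i => (ε i : ℝ)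

lemma inner_signVector (ε : Fin d → ℤˣ) (x : EuclideanSpace ℝ (Fin d)) :
    inner ℝ (signVector ε) x = ∑ i, (ε i : ℝ) * x i := by
  simp [signVector, PiLp.inner_apply, mul_comm]

lemma norm_signVector_sq (ε : Fin d → ℤˣ) : ‖signVector ε‖ ^ 2 = d := by
  simp [EuclideanSpace.real_norm_sq_eq, signVector, Int.cast_units_sq]

theorem norm_pow_four_eq_sign_average (x : EuclideanSpace ℝ (Fin d)) :
    3 * ‖x‖ ^ 4 = (2 ^ d)⁻¹ * ∑ ε, inner ℝ (signVector ε) x ^ 4 + 2 * ∑ i, x i ^ 4 := by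
  simp only [inner_signVector, sum_signs_sum_mul_pow_four, ← EuclideanSpace.real_norm_sq_eq]
  field_simp
  ring

end SignVectors

theorem integral_norm_pow_four_eq {Ω : Type*} [MeasurableSpace Ω] {μ : Measure Ω} {d : ℕ}
    {X : Ω → EuclideanSpace ℝ (Fin d)} (hint : ∀ v, Integrable (fun ω => inner ℝ v (X ω) ^ 4) μ) :
    3 * ∫ ω, ‖X ω‖ ^ 4 ∂μ
      = (2 ^ d)⁻¹ * ∑ ε, ∫ ω, inner ℝ (signVector ε) (X ω) ^ 4 ∂μ + 2 * ∑ i, ∫ ω, X ω i ^ 4 ∂μ := by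
  have hcoord (i : Fin d) : Integrable (fun ω => X ω i ^ 4) μ := by
    simpa [EuclideanSpace.inner_single_left] using hint (EuclideanSpace.single i 1)
  simp_rw [← integral_const_mul, norm_pow_four_eq_sign_average]
  rw [integral_add ((integrable_finsetSum _ fun ε _ => hint _).const_mul _)
      ((integrable_finsetSum _ fun i _ => hcoord i).const_mul _),
    integral_const_mul, integral_const_mul, integral_finsetSum _ fun ε _ => hint _,
    integral_finsetSum _ fun i _ => hcoord i]

theorem fourth_moment_isotropic_hypercontractive_general
    {Ω : Type*} [MeasurableSpace Ω] (μ : Measure Ω)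
    (d : ℕ) (C : ℝ) (hC : 1 ≤ C)
    (X : Ω → EuclideanSpace ℝ (Fin d))
    (hint : ∀ v : EuclideanSpace ℝ (Fin d),
      Integrable (fun ω => (inner ℝ v (X ω) : ℝ) ^ 4) μ)
    (hiso : ∀ v : EuclideanSpace ℝ (Fin d),
      ∫ ω, (inner ℝ v (X ω) : ℝ) ^ 2 ∂μ = ‖v‖ ^ 2)
    (hhyper : ∀ v : EuclideanSpace ℝ (Fin d),
      ∫ ω, (inner ℝ v (X ω) : ℝ) ^ 4 ∂μ
        ≤ C * (∫ ω, (inner ℝ v (X ω) : ℝ) ^ 2 ∂μ) ^ 2) :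
    (∫ ω, ‖X ω‖ ^ 4 ∂μ) ≤ C * ((d : ℝ) ^ 2 + 2 * d) / 3 ∧
      C * ((d : ℝ) ^ 2 + 2 * d) / 3 ≤ C * (d : ℝ) ^ 2 := by
  have hmoment (v : EuclideanSpace ℝ (Fin d)) :
      ∫ ω, inner ℝ v (X ω) ^ 4 ∂μ ≤ C * (‖v‖ ^ 2) ^ 2 :=
    hiso v ▸ hhyper v
  have hsigns : (2 ^ d)⁻¹ * ∑ ε, ∫ ω, inner ℝ (signVector ε) (X ω) ^ 4 ∂μ ≤ C * d ^ 2 := by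
    have hsum := sum_le_card_nsmul univ _ _ fun ε _ => norm_signVector_sq ε ▸ hmoment (signVector ε)
    simp only [card_univ, Fintype.card_fun, Fintype.card_units_int, Fintype.card_fin,
      nsmul_eq_mul, Nat.cast_pow, Nat.cast_ofNat] at hsum
    rwa [inv_mul_le_iff₀ (by positivity)]
  have hcoords : ∑ i, ∫ ω, X ω i ^ 4 ∂μ ≤ d * C := by
    have hcoord (i : Fin d) : ∫ ω, X ω i ^ 4 ∂μ ≤ C := by
      simpa [EuclideanSpace.inner_single_left] using hmoment (EuclideanSpace.single i 1)
    simpa using sum_le_card_nsmul univ _ _ fun i _ => hcoord i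
  have hd : (d : ℝ) ≤ d ^ 2 := by exact_mod_cast Nat.le_self_pow two_ne_zero d
  constructor
  · linarith [integral_norm_pow_four_eq hint]
  · nlinarith

/-- **Fourth-moment bound for isotropic hypercontractive random vectors.**
If a random vector `X` in `ℝ^d` (`d ≥ 1`) is isotropic (`E⟨v,X⟩² = ‖v‖²` for all `v`) and
`(C,4)`-hypercontractive (`E⟨v,X⟩⁴ ≤ C (E⟨v,X⟩²)²` for all `v`), then
`E‖X‖₂⁴ ≤ C (d² + 2d) / 3 ≤ C d²`. -/
theorem fourth_moment_isotropic_hypercontractive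
    {Ω : Type*} [MeasurableSpace Ω] (μ : Measure Ω) [IsProbabilityMeasure μ]
    (d : ℕ) (hd : 1 ≤ d) (C : ℝ) (hC : 1 ≤ C)
    (X : Ω → EuclideanSpace ℝ (Fin d)) (hXmeas : Measurable X)
    (hint : ∀ v : EuclideanSpace ℝ (Fin d),
      Integrable (fun ω => (inner ℝ v (X ω) : ℝ) ^ 4) μ)
    (hiso : ∀ v : EuclideanSpace ℝ (Fin d),
      ∫ ω, (inner ℝ v (X ω) : ℝ) ^ 2 ∂μ = ‖v‖ ^ 2)
    (hhyper : ∀ v : EuclideanSpace ℝ (Fin d),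
      ∫ ω, (inner ℝ v (X ω) : ℝ) ^ 4 ∂μ
        ≤ C * (∫ ω, (inner ℝ v (X ω) : ℝ) ^ 2 ∂μ) ^ 2) :
    (∫ ω, ‖X ω‖ ^ 4 ∂μ) ≤ C * ((d : ℝ) ^ 2 + 2 * d) / 3 ∧
      C * ((d : ℝ) ^ 2 + 2 * d) / 3 ≤ C * (d : ℝ) ^ 2 :=
  fourth_moment_isotropic_hypercontractive_general μ d C hC X hint hiso hhyper
end

section
/- Let d ≥ 1, C ≥ 1, and let x₁, …, x_n be i.i.d. random vectors in ℝ^d drawn from a distribution that is isotropic (E[⟨v,x⟩²] = ‖v‖² for all v ∈ ℝ^d) and (C,4)-hypercontractive (E[⟨v,x⟩⁴] ≤ C·(E[⟨v,x⟩²])² for all v ∈ ℝ^d). Then for every δ ∈ (0,1) and every 1 ≤ m ≤ n, with probability at least 1 − δ, every subset S ⊆ {1, …, n} with |S| ≤ m satisfies Σ_{i∈S} ‖x_i‖₂ ≤ 3·δ^{-1/4}·n^{1/4}·m^{3/4}·C^{1/4}·d^{1/2}. -/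
open MeasureTheory ProbabilityTheory Finset

/-!
By the power-mean inequality `(∑_{i∈S} ‖xᵢ‖)⁴ ≤ |S|³ ∑_{i∈S} ‖xᵢ‖⁴`, so on the event
`Y := ∑ᵢ ‖xᵢ‖⁴ < n C d² / δ` every `S` with `|S| ≤ m` satisfies
`∑_{i∈S} ‖xᵢ‖ ≤ (m³ n C d² / δ)^{1/4}`.
Markov's inequality makes this event have probability at least `1 - δ`, because
`𝔼 ‖x‖⁴ ≤ d ∑ⱼ 𝔼 xⱼ⁴ ≤ C d²`: isotropy and hypercontractivity at the basis vector `eⱼ`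
give `𝔼 xⱼ⁴ ≤ C`.
-/

theorem EuclideanSpace.norm_pow_four_le_card_mul_sum_pow_four {ι : Type*} [Fintype ι]
    (x : EuclideanSpace ℝ ι) : ‖x‖ ^ 4 ≤ Fintype.card ι * ∑ j, x j ^ 4 := by
  have hsq : ‖x‖ ^ 2 = ∑ j, x j ^ 2 := by simp [EuclideanSpace.norm_sq_eq]
  calc ‖x‖ ^ 4 = (∑ j, x j ^ 2) ^ 2 := by rw [← hsq]; ring
    _ ≤ Fintype.card ι * ∑ j, (x j ^ 2) ^ 2 := sq_sum_le_card_mul_sum_sq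
    _ = Fintype.card ι * ∑ j, x j ^ 4 := by simp only [← pow_mul]

theorem Finset.sum_le_of_card_pow_three_mul_sum_pow_four_le {ι : Type*} [Fintype ι] {f : ι → ℝ}
    (hf : 0 ≤ f) {s : Finset ι} {m : ℕ} (hs : #s ≤ m) {B : ℝ} (hB : 0 ≤ B)
    (h : (m : ℝ) ^ 3 * ∑ i, f i ^ 4 ≤ B ^ 4) : ∑ i ∈ s, f i ≤ B := by
  refine le_of_pow_le_pow_left₀ four_ne_zero hB ?_
  calc (∑ i ∈ s, f i) ^ 4 ≤ (#s : ℝ) ^ 3 * ∑ i ∈ s, f i ^ 4 :=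
        pow_sum_le_card_mul_sum_pow (fun i _ => hf i) 3
    _ ≤ (m : ℝ) ^ 3 * ∑ i, f i ^ 4 := by
        gcongr
        exact subset_univ s
    _ ≤ B ^ 4 := h

theorem rpow_quarter_bound_pow_four {δ n m C d : ℝ} (hδ : 0 ≤ δ) (hn : 0 ≤ n) (hm : 0 ≤ m)
    (hC : 0 ≤ C) (hd : 0 ≤ d) :
    (δ ^ (-(1 / 4 : ℝ)) * n ^ ((1 : ℝ) / 4) * m ^ ((3 : ℝ) / 4) * C ^ ((1 : ℝ) / 4)
      * d ^ ((1 : ℝ) / 2)) ^ 4 = m ^ 3 * (n * C * d ^ 2 / δ) := by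
  simp only [mul_pow, ← Real.rpow_mul_natCast hδ, ← Real.rpow_mul_natCast hn,
    ← Real.rpow_mul_natCast hm, ← Real.rpow_mul_natCast hC, ← Real.rpow_mul_natCast hd]
  norm_num [Real.rpow_neg_one]
  ring

section Moments

variable {Ω : Type*} [MeasurableSpace Ω] {μ : Measure Ω}

theorem ofReal_one_sub_le_measure_lt_div [IsProbabilityMeasure μ] {Y : Ω → ℝ} (hY0 : 0 ≤ Y)
    (hYi : Integrable Y μ) {K δ : ℝ} (hK : 0 < K) (hδ : 0 < δ) (hYK : ∫ ω, Y ω ∂μ ≤ K) :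
    ENNReal.ofReal (1 - δ) ≤ μ {ω | Y ω < K / δ} := by
  have hmarkov : μ.real {ω | K / δ ≤ Y ω} ≤ δ := by
    have := (mul_meas_ge_le_integral_of_nonneg (ae_of_all _ hY0) hYi (K / δ)).trans hYK
    rwa [div_mul_eq_mul_div, div_le_iff₀ hδ, mul_le_mul_iff_right₀ hK] at this
  have hnull : NullMeasurableSet {ω | K / δ ≤ Y ω} μ :=
    hYi.aemeasurable.nullMeasurable measurableSet_Ici
  calc ENNReal.ofReal (1 - δ) = 1 - ENNReal.ofReal δ := by
        rw [ENNReal.ofReal_sub 1 hδ.le, ENNReal.ofReal_one]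
    _ ≤ 1 - μ {ω | K / δ ≤ Y ω} := by
        gcongr
        exact (ENNReal.le_ofReal_iff_toReal_le (measure_ne_top _ _) hδ.le).2 hmarkov
    _ = μ {ω | Y ω < K / δ} := by
        rw [← prob_compl_eq_one_sub₀ hnull]
        simp only [Set.compl_ofPred, not_le]

variable {ι : Type*} [Fintype ι] {X : Ω → EuclideanSpace ℝ ι}

theorem integrable_coord_pow_four (hint : ∀ v, Integrable (fun ω => inner ℝ v (X ω) ^ 4) μ)
    (j : ι) : Integrable (fun ω => X ω j ^ 4) μ := by
  classical
  simpa [EuclideanSpace.inner_single_left] using hint (EuclideanSpace.single j 1)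

theorem integral_coord_pow_four_le {C : ℝ}
    (hiso : ∀ v, ∫ ω, inner ℝ v (X ω) ^ 2 ∂μ = ‖v‖ ^ 2)
    (hhyper : ∀ v, ∫ ω, inner ℝ v (X ω) ^ 4 ∂μ ≤ C * (∫ ω, inner ℝ v (X ω) ^ 2 ∂μ) ^ 2)
    (j : ι) : ∫ ω, X ω j ^ 4 ∂μ ≤ C := by
  classical
  have h := hhyper (EuclideanSpace.single j 1)
  rw [hiso] at h
  simpa [EuclideanSpace.inner_single_left] using h

theorem integrable_norm_pow_four (hX : Measurable X)
    (h4 : ∀ j, Integrable (fun ω => X ω j ^ 4) μ) : Integrable (fun ω => ‖X ω‖ ^ 4) μ :=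
  ((integrable_finsetSum _ fun j _ => h4 j).const_mul (Fintype.card ι)).mono'
    (hX.norm.pow_const 4).aestronglyMeasurable <| ae_of_all _ fun ω => by
      rw [Real.norm_of_nonneg (by positivity)]
      exact (X ω).norm_pow_four_le_card_mul_sum_pow_four

theorem integral_norm_pow_four_le (hX : Measurable X)
    (h4 : ∀ j, Integrable (fun ω => X ω j ^ 4) μ) {K : ℝ} (hK : ∀ j, ∫ ω, X ω j ^ 4 ∂μ ≤ K) :
    ∫ ω, ‖X ω‖ ^ 4 ∂μ ≤ Fintype.card ι ^ 2 * K :=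
  calc ∫ ω, ‖X ω‖ ^ 4 ∂μ ≤ ∫ ω, Fintype.card ι * ∑ j, X ω j ^ 4 ∂μ :=
        integral_mono (integrable_norm_pow_four hX h4)
          ((integrable_finsetSum _ fun j _ => h4 j).const_mul _)
          fun ω => (X ω).norm_pow_four_le_card_mul_sum_pow_four
    _ = Fintype.card ι * ∑ j, ∫ ω, X ω j ^ 4 ∂μ := by
        rw [integral_const_mul, integral_finsetSum _ fun j _ => h4 j]
    _ ≤ Fintype.card ι * ∑ _j : ι, K := by gcongr with j; exact hK j
    _ = Fintype.card ι ^ 2 * K := by simp only [sum_const, card_univ, nsmul_eq_mul]; ring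

end Moments

theorem sum_largest_norms_hypercontractive_general
    {Ω : Type*} [MeasurableSpace Ω] (μ : Measure Ω) [IsProbabilityMeasure μ]
    (d n m : ℕ) (hd : 1 ≤ d) (hm : 1 ≤ m) (hmn : m ≤ n)
    (C : ℝ) (hC : 1 ≤ C) (δ : ℝ) (hδ0 : 0 < δ)
    (x : Fin n → Ω → EuclideanSpace ℝ (Fin d))
    (hmeas : ∀ i, Measurable (x i))
    (hint : ∀ i (v : EuclideanSpace ℝ (Fin d)),
      Integrable (fun ω => (inner ℝ v (x i ω) : ℝ) ^ 4) μ)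
    (hiso : ∀ i (v : EuclideanSpace ℝ (Fin d)),
      ∫ ω, (inner ℝ v (x i ω) : ℝ) ^ 2 ∂μ = ‖v‖ ^ 2)
    (hhyper : ∀ i (v : EuclideanSpace ℝ (Fin d)),
      ∫ ω, (inner ℝ v (x i ω) : ℝ) ^ 4 ∂μ
        ≤ C * (∫ ω, (inner ℝ v (x i ω) : ℝ) ^ 2 ∂μ) ^ 2) :
    ENNReal.ofReal (1 - δ) ≤
      μ {ω | ∀ S : Finset (Fin n), S.card ≤ m →
        ∑ i ∈ S, ‖x i ω‖ ≤
          3 * δ ^ (-(1 / 4 : ℝ)) * (n : ℝ) ^ ((1 : ℝ) / 4) * (m : ℝ) ^ ((3 : ℝ) / 4)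
            * C ^ ((1 : ℝ) / 4) * (d : ℝ) ^ ((1 : ℝ) / 2)} := by
  have h4 i := integrable_coord_pow_four (hint i)
  have hnorm4 i := integrable_norm_pow_four (hmeas i) (h4 i)
  have hmoment : ∫ ω, ∑ i, ‖x i ω‖ ^ 4 ∂μ ≤ n * C * d ^ 2 := by
    rw [integral_finsetSum _ fun i _ => hnorm4 i]
    calc ∑ i, ∫ ω, ‖x i ω‖ ^ 4 ∂μ ≤ ∑ _i : Fin n, (d : ℝ) ^ 2 * C := by
          gcongr with i
          simpa using integral_norm_pow_four_le (hmeas i) (h4 i)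
            (integral_coord_pow_four_le (hiso i) (hhyper i))
      _ = n * C * d ^ 2 := by
        simp only [sum_const, card_univ, Fintype.card_fin, nsmul_eq_mul]; ring
  have hn : 0 < n := hm.trans hmn
  refine (ofReal_one_sub_le_measure_lt_div (fun ω => by positivity)
    (integrable_finsetSum _ fun i _ => hnorm4 i) (by positivity) hδ0 hmoment).trans
    (measure_mono fun ω hω S hS => ?_)
  set B := δ ^ (-(1 / 4 : ℝ)) * (n : ℝ) ^ ((1 : ℝ) / 4) * (m : ℝ) ^ ((3 : ℝ) / 4)
    * C ^ ((1 : ℝ) / 4) * (d : ℝ) ^ ((1 : ℝ) / 2) with hB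
  have hB0 : 0 ≤ B := by positivity
  have hsum : ∑ i ∈ S, ‖x i ω‖ ≤ B := by
    refine sum_le_of_card_pow_three_mul_sum_pow_four_le (fun i => norm_nonneg _) hS hB0 ?_
    rw [hB, rpow_quarter_bound_pow_four hδ0.le (by positivity) (by positivity) (by positivity)
      (by positivity)]
    gcongr
    exact hω.le
  calc ∑ i ∈ S, ‖x i ω‖ ≤ 3 * B := by linarith
    _ = _ := by rw [hB]; ring

/-- **Sum of the largest norms of i.i.d. hypercontractive vectors (Lemma 10 in the paper).**
If `x₁, …, xₙ` are i.i.d. isotropic `(C,4)`-hypercontractive random vectors in `ℝ^d`, then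
with probability at least `1 − δ`, every index subset `S` of size at most `m` satisfies
`∑_{i∈S} ‖xᵢ‖₂ ≤ 3 δ^{-1/4} n^{1/4} m^{3/4} C^{1/4} d^{1/2}`. -/
theorem sum_largest_norms_hypercontractive
    {Ω : Type*} [MeasurableSpace Ω] (μ : Measure Ω) [IsProbabilityMeasure μ]
    (d n m : ℕ) (hd : 1 ≤ d) (hm : 1 ≤ m) (hmn : m ≤ n)
    (C : ℝ) (hC : 1 ≤ C) (δ : ℝ) (hδ0 : 0 < δ) (hδ1 : δ < 1)
    (x : Fin n → Ω → EuclideanSpace ℝ (Fin d))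
    (hmeas : ∀ i, Measurable (x i))
    (hindep : iIndepFun x μ)
    (hident : ∀ i j, IdentDistrib (x i) (x j) μ μ)
    (hint : ∀ i (v : EuclideanSpace ℝ (Fin d)),
      Integrable (fun ω => (inner ℝ v (x i ω) : ℝ) ^ 4) μ)
    (hiso : ∀ i (v : EuclideanSpace ℝ (Fin d)),
      ∫ ω, (inner ℝ v (x i ω) : ℝ) ^ 2 ∂μ = ‖v‖ ^ 2)
    (hhyper : ∀ i (v : EuclideanSpace ℝ (Fin d)),
      ∫ ω, (inner ℝ v (x i ω) : ℝ) ^ 4 ∂μ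
        ≤ C * (∫ ω, (inner ℝ v (x i ω) : ℝ) ^ 2 ∂μ) ^ 2) :
    ENNReal.ofReal (1 - δ) ≤
      μ {ω | ∀ S : Finset (Fin n), S.card ≤ m →
        ∑ i ∈ S, ‖x i ω‖ ≤
          3 * δ ^ (-(1 / 4 : ℝ)) * (n : ℝ) ^ ((1 : ℝ) / 4) * (m : ℝ) ^ ((3 : ℝ) / 4)
            * C ^ ((1 : ℝ) / 4) * (d : ℝ) ^ ((1 : ℝ) / 2)} :=
  sum_largest_norms_hypercontractive_general μ d n m hd hm hmn C hC δ hδ0 x hmeas hint hiso hhyper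
end

section
/- Let β > 0, λ_r > 0, k ≥ 1, and ε ≤ (1/2)·β·λ_r. Let Σ be a d×d symmetric positive definite matrix with smallest eigenvalue λ_min(Σ) ≥ λ_r/k, let M₁ be a d×d symmetric matrix with ‖M₁ − Σ‖₂ ≤ (1/2)·λ_min(Σ), and let M₂ and Σ̂ be d×d symmetric positive semidefinite matrices with ‖M₂ − Σ̂‖₂ ≤ ε. Then: (i) if ‖Σ^{-1/2} Σ̂ Σ^{-1/2}‖₂ ≤ β·k, then ‖M₁^{-1/2} M₂ M₁^{-1/2}‖₂ ≤ 3·β·k; and (ii) if ‖Σ^{-1/2} Σ̂ Σ^{-1/2}‖₂ ≥ β·k, then ‖M₁^{-1/2} M₂ M₁^{-1/2}‖₂ ≥ (1/4)·β·k. -/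
/-!
Write `A ≼ B` for the Loewner order. For `A ≽ 0` and `B ≻ 0` the quantity
`‖B^{-1/2} A B^{-1/2}‖₂` is the least `c ≥ 0` with `A ≼ c B`, so both claims are statements about
the Loewner order. Since `λ_min(Σ) • 1 ≼ Σ`, the hypotheses give `(1/2) Σ ≼ M₁ ≼ (3/2) Σ` and
`M₂ ≼ Σ̂ + (βk/2) Σ`, `Σ̂ ≼ M₂ + (βk/2) Σ`. If `Σ̂ ≼ βk Σ` then `M₂ ≼ (3/2) βk Σ ≼ 3βk M₁`;
conversely `M₂ ≼ c M₁` gives `Σ̂ ≼ (3c/2 + βk/2) Σ`, so `βk ≤ 3c/2 + βk/2`, i.e. `c ≥ βk/3`.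
-/

open Matrix

/-- The spectral (ℓ²-operator) norm of a real `d × d` matrix. -/
noncomputable def matSpectralNorm {d : ℕ} (M : Matrix (Fin d) (Fin d) ℝ) : ℝ :=
  ‖LinearMap.toContinuousLinearMap (Matrix.toEuclideanLin M)‖

open scoped ComplexOrder in
/-- The square root of a positive semidefinite matrix, as defined in the older Mathlib
(`Matrix.PosSemidef.sqrt`, since removed). -/
noncomputable def Matrix.PosSemidef.sqrt {n 𝕜 : Type*} [Fintype n] [DecidableEq n] [RCLike 𝕜]
    {A : Matrix n n 𝕜} (hA : A.PosSemidef) : Matrix n n 𝕜 :=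
  hA.1.eigenvectorUnitary.1 * diagonal ((↑) ∘ (√·) ∘ hA.1.eigenvalues) *
    (star hA.1.eigenvectorUnitary : Matrix n n 𝕜)

open scoped MatrixOrder Matrix.Norms.L2Operator ComplexOrder

section Isometric

variable {A : Type*} [NormedRing A] [StarRing A] [NormedAlgebra ℝ A] [PartialOrder A]
  [StarOrderedRing A] [IsometricContinuousFunctionalCalculus ℝ A IsSelfAdjoint]
  [NonnegSpectrumClass ℝ A] {a b s : A} {r c t : ℝ}

theorem IsSelfAdjoint.norm_le_iff (ha : IsSelfAdjoint a) (hr : 0 ≤ r) :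
    ‖a‖ ≤ r ↔ -algebraMap ℝ A r ≤ a ∧ a ≤ algebraMap ℝ A r := by
  rw [← map_neg, algebraMap_le_iff_le_spectrum, le_algebraMap_iff_spectrum_le, ← forall₂_and]
  nth_rw 1 [← cfc_id' ℝ a]
  rw [norm_cfc_le_iff (fun x : ℝ ↦ x) a hr]
  simp only [Real.norm_eq_abs, abs_le]

theorem norm_le_iff_le_algebraMap_of_nonneg (ha : 0 ≤ a) (hr : 0 ≤ r) :
    ‖a‖ ≤ r ↔ a ≤ algebraMap ℝ A r := by
  rw [(IsSelfAdjoint.of_nonneg ha).norm_le_iff hr, and_iff_right_iff_imp]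
  intro _
  have : 0 ≤ algebraMap ℝ A r := cfc_const r a ▸ cfc_nonneg fun _ _ ↦ hr
  exact (neg_nonpos.2 this).trans ha

variable [PosSMulMono ℝ A]

theorem IsSelfAdjoint.le_add_smul_of_norm_sub_le (hab : IsSelfAdjoint (a - b))
    (hs : algebraMap ℝ A c ≤ s) (ht : 0 ≤ t) (h : ‖a - b‖ ≤ t * c) :
    a ≤ b + t • s ∧ b ≤ a + t • s := by
  have hts : algebraMap ℝ A (t * c) ≤ t • s := by
    rw [Algebra.algebraMap_eq_smul_one, mul_smul, ← Algebra.algebraMap_eq_smul_one]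
    exact smul_le_smul_of_nonneg_left hs ht
  obtain ⟨hlo, hhi⟩ := (hab.norm_le_iff ((norm_nonneg _).trans h)).1 h
  constructor
  · rw [sub_le_iff_le_add'] at hhi
    exact hhi.trans (add_le_add_right hts b)
  · rw [neg_le_sub_iff_le_add] at hlo
    exact hlo.trans (add_le_add_right hts a)

theorem IsSelfAdjoint.mem_Icc_smul_of_norm_sub_le (has : IsSelfAdjoint (a - s))
    (hs : algebraMap ℝ A c ≤ s) (ht : 0 ≤ t) (h : ‖a - s‖ ≤ t * c) :
    a ∈ Set.Icc ((1 - t) • s) ((1 + t) • s) := by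
  obtain ⟨hhi, hlo⟩ := has.le_add_smul_of_norm_sub_le hs ht h
  rw [sub_smul, add_smul, one_smul]
  exact ⟨sub_le_iff_le_add.2 hlo, hhi⟩

end Isometric

namespace Matrix

theorem matSpectralNorm_eq_norm {d : ℕ} (M : Matrix (Fin d) (Fin d) ℝ) :
    matSpectralNorm M = ‖M‖ :=
  rfl

variable {n 𝕜 : Type*} [RCLike 𝕜]

theorem PosDef.of_smul_le {A B : Matrix n n 𝕜} (hB : B.PosDef) {t : ℝ} (ht : 0 < t)
    (h : t • B ≤ A) : A.PosDef := by
  simpa using (hB.smul ht).add_posSemidef (le_iff.1 h)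

variable [Fintype n] [DecidableEq n]

theorem PosSemidef.sqrt_eq_cfcSqrt {A : Matrix n n 𝕜} (hA : A.PosSemidef) :
    hA.sqrt = CFC.sqrt A := by
  rw [CFC.sqrt_eq_real_sqrt A hA.nonneg, cfcₙ_eq_cfc, hA.1.cfc_eq, IsHermitian.cfc,
    Unitary.conjStarAlgAut_apply]
  rfl

theorem IsHermitian.algebraMap_le_iff_le_eigenvalues {A : Matrix n n 𝕜} (hA : A.IsHermitian)
    {c : ℝ} : algebraMap ℝ _ c ≤ A ↔ ∀ i, c ≤ hA.eigenvalues i := by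
  rw [algebraMap_le_iff_le_spectrum hA.isSelfAdjoint, hA.spectrum_real_eq_range_eigenvalues,
    Set.forall_mem_range]

theorem inv_mul_mul_inv_le_algebraMap_iff {S A : Matrix n n 𝕜} (hS : S.IsHermitian)
    (hSu : IsUnit S) {c : ℝ} : S⁻¹ * A * S⁻¹ ≤ algebraMap ℝ _ c ↔ A ≤ c • (S * S) := by
  have hdet := (isUnit_iff_isUnit_det S).1 hSu
  have hSS : S * S⁻¹ = 1 := mul_nonsing_inv S hdet
  have hSS' : S⁻¹ * S = 1 := nonsing_inv_mul S hdet
  constructor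
  · intro h
    simpa [mul_assoc, hSS, hSS', ← mul_assoc S S⁻¹, Algebra.algebraMap_eq_smul_one] using
      hS.isSelfAdjoint.conjugate_le_conjugate h
  · intro h
    simpa [mul_assoc, hSS, hSS', ← mul_assoc S⁻¹ S, Algebra.algebraMap_eq_smul_one] using
      hS.inv.isSelfAdjoint.conjugate_le_conjugate h

theorem PosDef.norm_sqrt_inv_mul_mul_sqrt_inv_le_iff {A B : Matrix n n ℝ} (hB : B.PosDef)
    (hA : A.PosSemidef) {c : ℝ} (hc : 0 ≤ c) :
    ‖(hB.posSemidef.sqrt)⁻¹ * A * (hB.posSemidef.sqrt)⁻¹‖ ≤ c ↔ A ≤ c • B := by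
  rw [hB.posSemidef.sqrt_eq_cfcSqrt]
  have hS : (CFC.sqrt B).IsHermitian := (CFC.sqrt_nonneg B).isSelfAdjoint
  have hSu : IsUnit (CFC.sqrt B) := (CFC.isUnit_sqrt_iff B).2 hB.isUnit
  rw [norm_le_iff_le_algebraMap_of_nonneg (hS.inv.isSelfAdjoint.conjugate_nonneg hA.nonneg) hc,
    inv_mul_mul_inv_le_algebraMap_iff hS hSu, CFC.sqrt_mul_sqrt_self B]

end Matrix

theorem distribution_shift_error_checking_general
    (d : ℕ) (β lamr ε : ℝ) (hβ : 0 < β) (k : ℕ) (hk : 1 ≤ k)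
    (hε : ε ≤ (1 / 2) * β * lamr)
    (Sig M₁ M₂ Sighat : Matrix (Fin d) (Fin d) ℝ)
    (hSig : Sig.PosDef)
    (hSigmin : lamr / k ≤ ⨅ i, hSig.1.eigenvalues i)
    (hM₁herm : M₁.IsHermitian)
    (hM₁close : matSpectralNorm (M₁ - Sig) ≤ (1 / 2) * ⨅ i, hSig.1.eigenvalues i)
    (hM₂ : M₂.PosSemidef) (hSighat : Sighat.PosSemidef)
    (hclose : matSpectralNorm (M₂ - Sighat) ≤ ε) :
    ∃ hM₁ : M₁.PosDef,
      (matSpectralNorm ((hSig.posSemidef.sqrt)⁻¹ * Sighat * (hSig.posSemidef.sqrt)⁻¹)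
          ≤ β * k →
        matSpectralNorm ((hM₁.posSemidef.sqrt)⁻¹ * M₂ * (hM₁.posSemidef.sqrt)⁻¹)
          ≤ 3 * β * k) ∧
      (β * k ≤
          matSpectralNorm ((hSig.posSemidef.sqrt)⁻¹ * Sighat * (hSig.posSemidef.sqrt)⁻¹) →
        (1 / 4) * β * k ≤
          matSpectralNorm ((hM₁.posSemidef.sqrt)⁻¹ * M₂ * (hM₁.posSemidef.sqrt)⁻¹)) := by
  simp only [matSpectralNorm_eq_norm] at *
  set lmin := ⨅ i, hSig.1.eigenvalues i
  have hk₀ : (0 : ℝ) < k := by exact_mod_cast hk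
  have hb : 0 ≤ β * k := by positivity
  have hSig_ge : algebraMap ℝ _ lmin ≤ Sig :=
    hSig.1.algebraMap_le_iff_le_eigenvalues.2 fun i ↦ ciInf_le (Finite.bddBelow_range _) i
  have hε' : ε ≤ β * k / 2 * lmin := calc
    ε ≤ 1 / 2 * β * lamr := hε
    _ ≤ 1 / 2 * β * (k * lmin) := by gcongr; exact (div_le_iff₀' hk₀).1 hSigmin
    _ = β * k / 2 * lmin := by ring
  obtain ⟨hM₁lo, hM₁hi⟩ := (hM₁herm.sub hSig.1).isSelfAdjoint.mem_Icc_smul_of_norm_sub_le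
    hSig_ge (by norm_num) hM₁close
  norm_num at hM₁lo hM₁hi
  obtain ⟨hM₂hi, hSighat_hi⟩ := (hM₂.1.sub hSighat.1).isSelfAdjoint.le_add_smul_of_norm_sub_le
    hSig_ge (by positivity) (hclose.trans hε')
  have hM₁ : M₁.PosDef := hSig.of_smul_le (by norm_num) hM₁lo
  refine ⟨hM₁, fun h ↦ ?_, fun h ↦ ?_⟩
  · rw [hSig.norm_sqrt_inv_mul_mul_sqrt_inv_le_iff hSighat hb] at h
    rw [hM₁.norm_sqrt_inv_mul_mul_sqrt_inv_le_iff hM₂ (by positivity)]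
    calc M₂ ≤ Sighat + (β * k / 2) • Sig := hM₂hi
      _ ≤ (β * k) • Sig + (β * k / 2) • Sig := by gcongr
      _ = (3 * β * k) • ((1 / 2 : ℝ) • Sig) := by module
      _ ≤ (3 * β * k) • M₁ := by gcongr
  · -- `c` is the least constant with `M₂ ≼ c M₁`.
    set c := ‖(hM₁.posSemidef.sqrt)⁻¹ * M₂ * (hM₁.posSemidef.sqrt)⁻¹‖
    have hc : 0 ≤ c := norm_nonneg _
    have hM₂c : M₂ ≤ c • M₁ := (hM₁.norm_sqrt_inv_mul_mul_sqrt_inv_le_iff hM₂ hc).1 le_rfl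
    have hSighat_c : Sighat ≤ (3 / 2 * c + β * k / 2) • Sig := calc
      Sighat ≤ M₂ + (β * k / 2) • Sig := hSighat_hi
      _ ≤ c • ((3 / 2 : ℝ) • Sig) + (β * k / 2) • Sig := by gcongr; exact hM₂c.trans (by gcongr)
      _ = (3 / 2 * c + β * k / 2) • Sig := by module
    have := (hSig.norm_sqrt_inv_mul_mul_sqrt_inv_le_iff hSighat (by positivity)).2 hSighat_c
    linarith

/-- **Distribution-shift error checking (matrix core of Lemma 9 in the paper).**
Suppose `ε ≤ (1/2) β λ_r`, `Sig` is symmetric positive definite with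
`λ_min(Sig) ≥ λ_r / k`, `M₁` is symmetric with `‖M₁ − Sig‖₂ ≤ (1/2) λ_min(Sig)`
(hence `M₁` is positive definite), and `M₂`, `Sighat` are positive semidefinite with
`‖M₂ − Sighat‖₂ ≤ ε`. Then the empirical check on `‖Sig^{-1/2} Sighat Sig^{-1/2}‖₂`
certifies `‖M₁^{-1/2} M₂ M₁^{-1/2}‖₂` up to constant factors:
(i) if `‖Sig^{-1/2} Sighat Sig^{-1/2}‖₂ ≤ β k` then `‖M₁^{-1/2} M₂ M₁^{-1/2}‖₂ ≤ 3 β k`;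
(ii) if `‖Sig^{-1/2} Sighat Sig^{-1/2}‖₂ ≥ β k` then
`‖M₁^{-1/2} M₂ M₁^{-1/2}‖₂ ≥ (1/4) β k`. -/
theorem distribution_shift_error_checking
    (d : ℕ) (β lamr ε : ℝ) (hβ : 0 < β) (hlamr : 0 < lamr) (k : ℕ) (hk : 1 ≤ k)
    (hε : ε ≤ (1 / 2) * β * lamr)
    (Sig M₁ M₂ Sighat : Matrix (Fin d) (Fin d) ℝ)
    (hSig : Sig.PosDef)
    (hSigmin : lamr / k ≤ ⨅ i, hSig.1.eigenvalues i)
    (hM₁herm : M₁.IsHermitian)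
    (hM₁close : matSpectralNorm (M₁ - Sig) ≤ (1 / 2) * ⨅ i, hSig.1.eigenvalues i)
    (hM₂ : M₂.PosSemidef) (hSighat : Sighat.PosSemidef)
    (hclose : matSpectralNorm (M₂ - Sighat) ≤ ε) :
    ∃ hM₁ : M₁.PosDef,
      (matSpectralNorm ((hSig.posSemidef.sqrt)⁻¹ * Sighat * (hSig.posSemidef.sqrt)⁻¹)
          ≤ β * k →
        matSpectralNorm ((hM₁.posSemidef.sqrt)⁻¹ * M₂ * (hM₁.posSemidef.sqrt)⁻¹)
          ≤ 3 * β * k) ∧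
      (β * k ≤
          matSpectralNorm ((hSig.posSemidef.sqrt)⁻¹ * Sighat * (hSig.posSemidef.sqrt)⁻¹) →
        (1 / 4) * β * k ≤
          matSpectralNorm ((hM₁.posSemidef.sqrt)⁻¹ * M₂ * (hM₁.posSemidef.sqrt)⁻¹)) :=
  distribution_shift_error_checking_general d β lamr ε hβ k hk hε Sig M₁ M₂ Sighat hSig hSigmin
    hM₁herm hM₁close hM₂ hSighat hclose
end
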